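/- Let S ⊊ ℤ² be B-stable. If S contains three points of some border triangle, then S = ℤ². Equivalently, S ⊊ ℤ² is B-stable if and only if S contains at most 2 points from every border triangle. -/

import Mathlib

/-- Embed a lattice point into the plane. -/
def toR (p : ℤ × ℤ) : ℝ × ℝ := ((p.1 : ℝ), (p.2 : ℝ))

/-- Determinant of the 2×2 matrix with columns `u`, `v`. -/
def det2 (u v : ℤ × ℤ) : ℤ := u.1 * v.2 - u.2 * v.1

/-- The set of lattice points in the (closed) triangle with vertices `a b c`. -/
def triPts (a b c : ℤ × ℤ) : Set (ℤ × ℤ) :=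
  {p | toR p ∈ convexHull ℝ {toR a, toR b, toR c}}

/-- A border triangle: a lattice triangle with exactly 4 lattice points, whose
fourth point lies on the boundary (not in the interior). -/
def IsBorderTri (T : Set (ℤ × ℤ)) : Prop :=
  ∃ a b c d : ℤ × ℤ, det2 (b - a) (c - a) ≠ 0 ∧
    T = triPts a b c ∧ T = {a, b, c, d} ∧ T.ncard = 4 ∧
    toR d ∉ interior (convexHull ℝ {toR a, toR b, toR c})

/-- An internal triangle: a lattice triangle with exactly 4 lattice points, whose
fourth point lies in the interior. -/
def IsInternalTri (T : Set (ℤ × ℤ)) : Prop :=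
  ∃ a b c d : ℤ × ℤ, det2 (b - a) (c - a) ≠ 0 ∧
    T = triPts a b c ∧ T = {a, b, c, d} ∧ T.ncard = 4 ∧
    toR d ∈ interior (convexHull ℝ {toR a, toR b, toR c})

/-- `S` is B-stable: no border triangle has exactly three of its points in `S`. -/
def BStable (S : Set (ℤ × ℤ)) : Prop :=
  ∀ T, IsBorderTri T → (T ∩ S).ncard ≠ 3

/-- `S` is I-stable: no internal triangle has exactly three of its points in `S`. -/
def IStable (S : Set (ℤ × ℤ)) : Prop :=
  ∀ T, IsInternalTri T → (T ∩ S).ncard ≠ 3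

/-- Upper density of a subset of `ℤ²`. -/
noncomputable def upperDensity (S : Set (ℤ × ℤ)) : ℝ :=
  Filter.limsup (fun n : ℕ =>
    ((S ∩ Set.Icc (-(n : ℤ), -(n : ℤ)) ((n : ℤ), (n : ℤ))).ncard : ℝ) /
      (2 * (n : ℝ) + 1) ^ 2) Filter.atTop

/-!
A B-stable set containing three points of a border triangle contains all four. The fourth point
of a border triangle lies on an edge, so that edge carries three consecutive lattice points
`p - u, p, p + u` with `u` primitive. Completing `u` to a basis `(u, v)` of `ℤ²`, every set
`{q - u, q, q + u, q + v}` is a border triangle, being the image of the one with vertices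
`(-1, 0), (1, 0), (0, 1)` under a unimodular affine map. Hence `S` contains `q + v` as soon as it
contains `q - u, q, q + u`, and starting from the first three points this fills the lines
`p + ℤ u + n v` one after the other.
-/

open Set Filter Topology

def cross (u v : ℝ × ℝ) : ℝ := u.1 * v.2 - u.2 * v.1

lemma notMem_interior_of_forall_pos {E : Type*} [AddCommGroup E] [Module ℝ E] [TopologicalSpace E]
    [ContinuousAdd E] [ContinuousSMul ℝ E] {s : Set E} {x n : E}
    (h : ∀ t : ℝ, 0 < t → x + t • n ∉ s) : x ∉ interior s := by
  intro hx
  have hlim : Tendsto (fun t : ℝ => x + t • n) (𝓝[>] 0) (𝓝 x) := by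
    have hcont : Continuous fun t : ℝ => x + t • n := by fun_prop
    simpa using (hcont.tendsto 0).mono_left nhdsWithin_le_nhds
  obtain ⟨t, hts, ht⟩ :=
    ((hlim.eventually (mem_interior_iff_mem_nhds.1 hx)).and self_mem_nhdsWithin).exists
  exact h t ht hts

lemma smul_add_smul_add_smul_mem_convexHull {E : Type*} [AddCommGroup E] [Module ℝ E]
    {A B C : E} {α β γ : ℝ} (hα : 0 ≤ α) (hβ : 0 ≤ β) (hγ : 0 ≤ γ) (hsum : α + β + γ = 1) :
    α • A + β • B + γ • C ∈ convexHull ℝ {A, B, C} := by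
  have h := (convex_convexHull ℝ {A, B, C}).sum_mem (t := Finset.univ) (w := ![α, β, γ])
    (z := ![A, B, C]) (by simp [Fin.forall_fin_succ, hα, hβ, hγ])
    (by simp [Fin.sum_univ_three, hsum])
    (fun i _ => subset_convexHull ℝ _ (by fin_cases i <;> simp))
  simpa [Fin.sum_univ_three, add_assoc] using h

lemma insert_rotate {α : Type*} (a b c : α) : ({b, c, a} : Set α) = {a, b, c} := by
  rw [pair_comm, insert_comm]

section Triangle

variable {A B C x : ℝ × ℝ}

lemma cross_sub_rotate (A B C : ℝ × ℝ) : cross (C - B) (A - B) = cross (B - A) (C - A) := by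
  simp only [cross, Prod.fst_sub, Prod.snd_sub]; ring

lemma cross_add_cross_add_cross (A B C x : ℝ × ℝ) :
    cross (B - A) (x - A) + cross (C - B) (x - B) + cross (A - C) (x - C) =
      cross (B - A) (C - A) := by
  simp only [cross, Prod.fst_sub, Prod.snd_sub]; ring

lemma convexHull_subset_cross_nonneg (hD : 0 < cross (B - A) (C - A)) :
    convexHull ℝ {A, B, C} ⊆ {y | 0 ≤ cross (B - A) (y - A)} := by
  refine convexHull_min ?_ ?_
  · rintro y (rfl | rfl | rfl)
    · simp [cross]
    · simp [cross, mul_comm]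
    · exact hD.le
  · intro y hy z hz a b ha hb hab
    have hlin : cross (B - A) (a • y + b • z - A)
        = a * cross (B - A) (y - A) + b * cross (B - A) (z - A) := by
      simp only [cross, Prod.fst_sub, Prod.snd_sub, Prod.fst_add, Prod.snd_add, Prod.smul_fst,
        Prod.smul_snd, smul_eq_mul]
      linear_combination ((B.1 - A.1) * A.2 - (B.2 - A.2) * A.1) * hab
    obtain hy : 0 ≤ cross (B - A) (y - A) := hy
    obtain hz : 0 ≤ cross (B - A) (z - A) := hz
    show 0 ≤ cross (B - A) (a • y + b • z - A)
    rw [hlin]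
    positivity

/-- Barycentric coordinates by Cramer's rule. -/
lemma eq_cross_div_smul_add (hD : cross (B - A) (C - A) ≠ 0) :
    x = (cross (C - B) (x - B) / cross (B - A) (C - A)) • A +
      (cross (A - C) (x - C) / cross (B - A) (C - A)) • B +
      (cross (B - A) (x - A) / cross (B - A) (C - A)) • C := by
  ext <;> simp only [Prod.fst_add, Prod.snd_add, Prod.smul_fst, Prod.smul_snd, smul_eq_mul] <;>
    field_simp <;> simp only [cross, Prod.fst_sub, Prod.snd_sub] <;> ring

lemma mem_convexHull_iff_cross_nonneg (hD : 0 < cross (B - A) (C - A)) :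
    x ∈ convexHull ℝ {A, B, C} ↔
      0 ≤ cross (B - A) (x - A) ∧ 0 ≤ cross (C - B) (x - B) ∧ 0 ≤ cross (A - C) (x - C) := by
  constructor
  · intro hx
    refine ⟨convexHull_subset_cross_nonneg hD hx, ?_, ?_⟩
    · rw [← cross_sub_rotate] at hD
      exact convexHull_subset_cross_nonneg hD (by rwa [insert_rotate])
    · rw [← cross_sub_rotate, ← cross_sub_rotate] at hD
      exact convexHull_subset_cross_nonneg hD (by rwa [insert_rotate, insert_rotate])
  · rintro ⟨hAB, hBC, hCA⟩
    rw [eq_cross_div_smul_add (x := x) hD.ne']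
    refine smul_add_smul_add_smul_mem_convexHull (by positivity) (by positivity) (by positivity) ?_
    rw [← add_div, ← add_div, div_eq_one_iff_eq hD.ne']
    linarith [cross_add_cross_add_cross A B C x]

lemma mem_segment_of_cross_eq_zero (hD : 0 < cross (B - A) (C - A))
    (hx : x ∈ convexHull ℝ {A, B, C}) (h0 : cross (B - A) (x - A) = 0) : x ∈ segment ℝ A B := by
  obtain ⟨-, hBC, hCA⟩ := (mem_convexHull_iff_cross_nonneg hD).1 hx
  rw [eq_cross_div_smul_add (x := x) hD.ne', h0, zero_div, zero_smul, add_zero]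
  refine ⟨_, _, by positivity, by positivity, ?_, rfl⟩
  rw [← add_div, div_eq_one_iff_eq hD.ne']
  linarith [cross_add_cross_add_cross A B C x]

lemma mem_interior_of_cross_pos (hD : 0 < cross (B - A) (C - A))
    (hAB : 0 < cross (B - A) (x - A)) (hBC : 0 < cross (C - B) (x - B))
    (hCA : 0 < cross (A - C) (x - C)) : x ∈ interior (convexHull ℝ {A, B, C}) := by
  let U := {y : ℝ × ℝ |
    0 < cross (B - A) (y - A) ∧ 0 < cross (C - B) (y - B) ∧ 0 < cross (A - C) (y - C)}
  have hc (P Q : ℝ × ℝ) : Continuous fun y : ℝ × ℝ => cross P (y - Q) := by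
    unfold cross; fun_prop
  have hU : IsOpen U := (isOpen_lt continuous_const (hc _ _)).inter
    ((isOpen_lt continuous_const (hc _ _)).inter (isOpen_lt continuous_const (hc _ _)))
  refine interior_maximal (fun y hy => ?_) hU ⟨hAB, hBC, hCA⟩
  exact (mem_convexHull_iff_cross_nonneg hD).2 ⟨hy.1.le, hy.2.1.le, hy.2.2.le⟩

lemma notMem_interior_of_cross_eq_zero (hD : 0 < cross (B - A) (C - A))
    (h0 : cross (B - A) (x - A) = 0) : x ∉ interior (convexHull ℝ {A, B, C}) := by
  refine notMem_interior_of_forall_pos (n := A - C) fun t ht hmem => ?_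
  have hlin : cross (B - A) (x + t • (A - C) - A) =
      cross (B - A) (x - A) - t * cross (B - A) (C - A) := by
    simp only [cross, Prod.fst_sub, Prod.snd_sub, Prod.fst_add, Prod.snd_add, Prod.smul_fst,
      Prod.smul_snd, smul_eq_mul]
    ring
  have := ((mem_convexHull_iff_cross_nonneg hD).1 hmem).1
  rw [hlin, h0] at this
  nlinarith

lemma mem_segment_of_notMem_interior (hD : cross (B - A) (C - A) ≠ 0)
    (hx : x ∈ convexHull ℝ {A, B, C}) (hint : x ∉ interior (convexHull ℝ {A, B, C})) :
    x ∈ segment ℝ A B ∨ x ∈ segment ℝ B C ∨ x ∈ segment ℝ C A := by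
  wlog hpos : 0 < cross (B - A) (C - A) generalizing B C
  · have hswap : ({A, C, B} : Set (ℝ × ℝ)) = {A, B, C} := by rw [pair_comm]
    have hneg : cross (C - A) (B - A) = -cross (B - A) (C - A) := by
      simp only [cross]; ring
    rcases this (B := C) (C := B) (by rw [hneg]; exact neg_ne_zero.2 hD) (by rwa [hswap])
      (by rwa [hswap]) (by rw [hneg]; exact neg_pos.2 (lt_of_le_of_ne (not_lt.1 hpos) hD))
      with h | h | h
    · exact Or.inr (Or.inr (segment_symm ℝ C A ▸ h))
    · exact Or.inr (Or.inl (segment_symm ℝ B C ▸ h))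
    · exact Or.inl (segment_symm ℝ A B ▸ h)
  obtain ⟨hAB, hBC, hCA⟩ := (mem_convexHull_iff_cross_nonneg hpos).1 hx
  by_contra! hedge
  refine hint (mem_interior_of_cross_pos hpos (hAB.lt_of_ne fun h0 => hedge.1 ?_)
    (hBC.lt_of_ne fun h0 => hedge.2.1 ?_) (hCA.lt_of_ne fun h0 => hedge.2.2 ?_))
  · exact mem_segment_of_cross_eq_zero hpos hx h0.symm
  · rw [← cross_sub_rotate] at hpos
    exact mem_segment_of_cross_eq_zero hpos (by rwa [insert_rotate]) h0.symm
  · rw [← cross_sub_rotate, ← cross_sub_rotate] at hpos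
    exact mem_segment_of_cross_eq_zero hpos (by rwa [insert_rotate, insert_rotate]) h0.symm

end Triangle

lemma ncard_le_three {α : Type*} (a b c : α) : ({a, b, c} : Set α).ncard ≤ 3 := by
  have h₁ := ncard_insert_le a {b, c}
  have h₂ := ncard_insert_le b {c}
  rw [ncard_singleton] at h₂
  omega

lemma notMem_of_ncard_eq_four {α : Type*} {a b c d : α}
    (h : ({a, b, c, d} : Set α).ncard = 4) : d ∉ ({a, b, c} : Set α) := by
  intro hd
  have hsub : ({a, b, c, d} : Set α) ⊆ {a, b, c} := by simp [insert_subset_iff, hd]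
  have := (ncard_le_ncard hsub).trans (ncard_le_three a b c)
  omega

section Lattice

lemma toR_injective : Function.Injective toR := by
  intro p q h
  simp only [toR, Prod.ext_iff, Int.cast_inj] at h
  exact Prod.ext h.1 h.2

lemma toR_add (p q : ℤ × ℤ) : toR (p + q) = toR p + toR q := by
  ext <;> simp [toR]

lemma toR_sub (p q : ℤ × ℤ) : toR (p - q) = toR p - toR q := by
  ext <;> simp [toR]

lemma toR_zsmul (k : ℤ) (p : ℤ × ℤ) : toR (k • p) = (k : ℝ) • toR p := by
  ext <;> simp [toR]

lemma cross_toR (u v : ℤ × ℤ) : cross (toR u) (toR v) = det2 u v := by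
  simp [cross, det2, toR]

variable {a b c p x u d : ℤ × ℤ}

lemma mem_triPts_iff (hD : 0 < det2 (b - a) (c - a)) :
    p ∈ triPts a b c ↔
      0 ≤ det2 (b - a) (p - a) ∧ 0 ≤ det2 (c - b) (p - b) ∧ 0 ≤ det2 (a - c) (p - c) := by
  have hD' : 0 < cross (toR b - toR a) (toR c - toR a) := by
    rwa [← toR_sub, ← toR_sub, cross_toR, Int.cast_pos]
  show toR p ∈ convexHull ℝ {toR a, toR b, toR c} ↔ _
  simp only [mem_convexHull_iff_cross_nonneg hD', ← toR_sub, cross_toR]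
  norm_cast

lemma toR_add_zsmul_mem_segment {k g : ℤ} (hk : 0 ≤ k) (hkg : k ≤ g) :
    toR (x + k • u) ∈ segment ℝ (toR x) (toR (x + g • u)) := by
  rw [segment_eq_image']
  refine ⟨k / g, ⟨div_nonneg (by exact_mod_cast hk) (by exact_mod_cast hk.trans hkg),
    div_le_one_of_le₀ (by exact_mod_cast hkg) (by exact_mod_cast hk.trans hkg)⟩, ?_⟩
  obtain rfl | hg := eq_or_ne g 0
  · obtain rfl : k = 0 := by omega
    simp
  · dsimp only
    rw [toR_add, toR_add, toR_zsmul, toR_zsmul, add_sub_cancel_left, smul_smul,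
      div_mul_cancel₀ _ (by exact_mod_cast hg)]

lemma exists_eq_add_zsmul_of_mem_segment {g : ℤ} (hu : IsCoprime u.1 u.2) (hg : 0 ≤ g)
    (hd : toR d ∈ segment ℝ (toR x) (toR (x + g • u))) :
    ∃ k : ℤ, 0 ≤ k ∧ k ≤ g ∧ d = x + k • u := by
  rw [segment_eq_image'] at hd
  obtain ⟨θ, ⟨hθ₀, hθ₁⟩, hθ⟩ := hd
  dsimp only at hθ
  rw [toR_add, toR_zsmul, add_sub_cancel_left, smul_smul] at hθ
  have h₁ : (d.1 : ℝ) = x.1 + θ * g * u.1 := by simpa [toR] using (congrArg Prod.fst hθ).symm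
  have h₂ : (d.2 : ℝ) = x.2 + θ * g * u.2 := by simpa [toR] using (congrArg Prod.snd hθ).symm
  obtain ⟨α, β, hαβ⟩ := hu
  -- the coordinate of `d - x` along the primitive vector `u`, read off by a Bézout relation
  set k := α * (d.1 - x.1) + β * (d.2 - x.2)
  have hk : (k : ℝ) = θ * g := by
    have hαβ' : (α : ℝ) * u.1 + β * u.2 = 1 := by exact_mod_cast hαβ
    push_cast [k]
    rw [h₁, h₂]
    linear_combination θ * g * hαβ'
  have hg' : (0 : ℝ) ≤ g := by exact_mod_cast hg
  refine ⟨k, ?_, ?_, ?_⟩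
  · have : (0 : ℝ) ≤ k := by rw [hk]; positivity
    exact_mod_cast this
  · have : (k : ℝ) ≤ g := by rw [hk]; nlinarith
    exact_mod_cast this
  · have e₁ : (d.1 : ℝ) = x.1 + k * u.1 := by rw [h₁, hk]
    have e₂ : (d.2 : ℝ) = x.2 + k * u.2 := by rw [h₂, hk]
    ext
    · exact_mod_cast e₁
    · exact_mod_cast e₂

lemma exists_isCoprime_of_mem_segment {y : ℤ × ℤ} (hd : toR d ∈ segment ℝ (toR x) (toR y))
    (hdx : d ≠ x) (hdy : d ≠ y) :
    ∃ u : ℤ × ℤ, IsCoprime u.1 u.2 ∧ toR (d - u) ∈ segment ℝ (toR x) (toR y) ∧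
      toR (d + u) ∈ segment ℝ (toR x) (toR y) := by
  set w := y - x
  have hg : 0 < Int.gcd w.1 w.2 := by
    refine Nat.pos_of_ne_zero fun h0 => hdx ?_
    obtain ⟨h₁, h₂⟩ := Int.gcd_eq_zero_iff.1 h0
    have hxy : y = x := by
      ext
      · simpa [w, sub_eq_zero] using h₁
      · simpa [w, sub_eq_zero] using h₂
    rw [hxy, segment_same] at hd
    exact toR_injective hd
  set g : ℤ := (Int.gcd w.1 w.2 : ℤ)
  set u : ℤ × ℤ := (w.1 / g, w.2 / g)
  have hu : IsCoprime u.1 u.2 := Int.isCoprime_iff_gcd_eq_one.2 (Int.gcd_div_gcd_div_gcd hg)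
  have hy : y = x + g • u := by
    have h₁ : g * (w.1 / g) = w.1 := Int.mul_ediv_cancel' (Int.gcd_dvd_left w.1 w.2)
    have h₂ : g * (w.2 / g) = w.2 := Int.mul_ediv_cancel' (Int.gcd_dvd_right w.1 w.2)
    ext
    · rw [Prod.fst_add, Prod.smul_fst, smul_eq_mul, h₁]; simp [w]
    · rw [Prod.snd_add, Prod.smul_snd, smul_eq_mul, h₂]; simp [w]
  rw [hy] at hd hdy ⊢
  obtain ⟨k, hk₀, hkg, rfl⟩ := exists_eq_add_zsmul_of_mem_segment hu (by positivity) hd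
  have hk₀' : k ≠ 0 := by rintro rfl; simp at hdx
  have hkg' : k ≠ g := by rintro rfl; exact hdy rfl
  refine ⟨u, hu, ?_, ?_⟩
  · rw [show x + k • u - u = x + (k - 1) • u by module]
    exact toR_add_zsmul_mem_segment (by omega) (by omega)
  · rw [show x + k • u + u = x + (k + 1) • u by module]
    exact toR_add_zsmul_mem_segment (by omega) (by omega)

end Lattice

def latticeMap (u v z : ℤ × ℤ) : ℤ × ℤ := z.1 • u + z.2 • v

section Unimodular

variable {u v : ℤ × ℤ}

lemma latticeMap_sub (z w : ℤ × ℤ) :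
    latticeMap u v (z - w) = latticeMap u v z - latticeMap u v w := by
  simp only [latticeMap, Prod.fst_sub, Prod.snd_sub, sub_smul]
  abel

lemma det2_latticeMap (h : det2 u v = 1) (z w : ℤ × ℤ) :
    det2 (latticeMap u v z) (latticeMap u v w) = det2 z w := by
  simp only [det2, latticeMap, Prod.fst_add, Prod.snd_add, Prod.smul_fst, Prod.smul_snd,
    smul_eq_mul] at h ⊢
  linear_combination (z.1 * w.2 - z.2 * w.1) * h

lemma latticeMap_det2 (h : det2 u v = 1) (w : ℤ × ℤ) :
    latticeMap u v (det2 w v, det2 u w) = w := by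
  simp only [det2, latticeMap] at h ⊢
  ext
  · simp only [Prod.fst_add, Prod.smul_fst, smul_eq_mul]; linear_combination w.1 * h
  · simp only [Prod.snd_add, Prod.smul_snd, smul_eq_mul]; linear_combination w.2 * h

lemma latticeMap_injective (h : det2 u v = 1) : Function.Injective (latticeMap u v) := by
  intro z w hzw
  have h₁ : det2 (latticeMap u v z) (latticeMap u v (0, 1)) =
      det2 (latticeMap u v w) (latticeMap u v (0, 1)) := by rw [hzw]
  have h₂ : det2 (latticeMap u v (1, 0)) (latticeMap u v z) =
      det2 (latticeMap u v (1, 0)) (latticeMap u v w) := by rw [hzw]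
  rw [det2_latticeMap h, det2_latticeMap h] at h₁ h₂
  simp only [det2] at h₁ h₂
  ext <;> linarith

lemma add_latticeMap_mem_triPts_iff (h : det2 u v = 1) (p : ℤ × ℤ) {a b c z : ℤ × ℤ}
    (hD : 0 < det2 (b - a) (c - a)) :
    p + latticeMap u v z ∈
        triPts (p + latticeMap u v a) (p + latticeMap u v b) (p + latticeMap u v c) ↔
      z ∈ triPts a b c := by
  have hD' : 0 < det2 (p + latticeMap u v b - (p + latticeMap u v a))
      (p + latticeMap u v c - (p + latticeMap u v a)) := by
    rwa [add_sub_add_left_eq_sub, add_sub_add_left_eq_sub, ← latticeMap_sub, ← latticeMap_sub,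
      det2_latticeMap h]
  rw [mem_triPts_iff hD', mem_triPts_iff hD]
  simp only [add_sub_add_left_eq_sub, ← latticeMap_sub, det2_latticeMap h]

end Unimodular

lemma triPts_standard : triPts (-1, 0) (1, 0) (0, 1) = {(-1, 0), (0, 0), (1, 0), (0, 1)} := by
  ext z
  rw [mem_triPts_iff (by decide)]
  simp only [det2, mem_insert_iff, mem_singleton_iff, Prod.ext_iff, Prod.fst_sub, Prod.snd_sub]
  omega

lemma isBorderTri_of_det2_eq_one {u v : ℤ × ℤ} (h : det2 u v = 1) (p : ℤ × ℤ) :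
    IsBorderTri {p - u, p, p + u, p + v} := by
  -- `f` maps the standard border triangle `(-1, 0), (0, 0), (1, 0), (0, 1)` onto ours.
  set f : ℤ × ℤ → ℤ × ℤ := fun z => p + latticeMap u v z
  have hf : Function.Injective f := fun z w hzw => latticeMap_injective h (add_left_cancel hzw)
  have hf_sub (z w : ℤ × ℤ) : f z - f w = latticeMap u v (z - w) := by
    simp only [f, add_sub_add_left_eq_sub, latticeMap_sub]
  have himage :
      ({p - u, p, p + u, p + v} : Set (ℤ × ℤ)) = f '' {(-1, 0), (0, 0), (1, 0), (0, 1)} := by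
    simp [f, latticeMap, image_insert_eq, sub_eq_add_neg]
  have hD : det2 (f (1, 0) - f (-1, 0)) (f (0, 1) - f (-1, 0)) = 2 := by
    rw [hf_sub, hf_sub, det2_latticeMap h]; decide
  refine ⟨f (-1, 0), f (1, 0), f (0, 1), f (0, 0), by omega, ?_, ?_, ?_, ?_⟩
  · ext q
    obtain ⟨z, rfl⟩ : ∃ z, f z = q :=
      ⟨(det2 (q - p) v, det2 u (q - p)), by simp only [f, latticeMap_det2 h, add_sub_cancel]⟩
    rw [himage, hf.mem_set_image, add_latticeMap_mem_triPts_iff h p (by decide), triPts_standard]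
  · rw [himage]
    ext q
    simp only [image_insert_eq, image_singleton, mem_insert_iff, mem_singleton_iff]
    tauto
  · rw [himage, ncard_image_of_injective _ hf]
    simp [ncard_insert_of_notMem]
  · refine notMem_interior_of_cross_eq_zero ?_ ?_
    · rw [← toR_sub, ← toR_sub, cross_toR, hD]; norm_num
    · rw [← toR_sub, ← toR_sub, cross_toR, hf_sub, hf_sub, det2_latticeMap h]; simp [det2]

lemma IsBorderTri.ncard_eq_four {T : Set (ℤ × ℤ)} (hT : IsBorderTri T) : T.ncard = 4 := by
  obtain ⟨-, -, -, -, -, -, -, h4, -⟩ := hT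
  exact h4

lemma IsBorderTri.exists_coprime_progression {T : Set (ℤ × ℤ)} (hT : IsBorderTri T) :
    ∃ p u : ℤ × ℤ, IsCoprime u.1 u.2 ∧ p - u ∈ T ∧ p ∈ T ∧ p + u ∈ T := by
  obtain ⟨a, b, c, d, hD, rfl, hT, h4, hint⟩ := hT
  have hd : d ∈ triPts a b c := by rw [hT]; simp
  have hdabc : d ∉ ({a, b, c} : Set (ℤ × ℤ)) := notMem_of_ncard_eq_four (hT ▸ h4)
  have hedge (x y : ℤ × ℤ) (hx : x ∈ ({a, b, c} : Set (ℤ × ℤ)))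
      (hy : y ∈ ({a, b, c} : Set (ℤ × ℤ))) (hseg : toR d ∈ segment ℝ (toR x) (toR y)) :
      ∃ p u : ℤ × ℤ, IsCoprime u.1 u.2 ∧ p - u ∈ triPts a b c ∧ p ∈ triPts a b c ∧
        p + u ∈ triPts a b c := by
    obtain ⟨u, hu, hl, hr⟩ :=
      exists_isCoprime_of_mem_segment hseg (fun h => hdabc (h ▸ hx)) (fun h => hdabc (h ▸ hy))
    have hvert {z : ℤ × ℤ} (hz : z ∈ ({a, b, c} : Set (ℤ × ℤ))) :
        toR z ∈ ({toR a, toR b, toR c} : Set (ℝ × ℝ)) := by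
      rcases hz with rfl | rfl | rfl <;> simp
    have hsub := segment_subset_convexHull (𝕜 := ℝ) (hvert hx) (hvert hy)
    exact ⟨d, u, hu, hsub hl, hd, hsub hr⟩
  have hD' : cross (toR b - toR a) (toR c - toR a) ≠ 0 := by
    rwa [← toR_sub, ← toR_sub, cross_toR, Int.cast_ne_zero]
  rcases mem_segment_of_notMem_interior hD' hd hint with h | h | h
  · exact hedge a b (by simp) (by simp) h
  · exact hedge b c (by simp) (by simp) h
  · exact hedge c a (by simp) (by simp) h

namespace BStable

variable {S : Set (ℤ × ℤ)}

lemma subset_of_three_le_ncard (hS : BStable S) {T : Set (ℤ × ℤ)} (hT : IsBorderTri T)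
    (h3 : 3 ≤ (T ∩ S).ncard) : T ⊆ S := by
  have hfin : T.Finite := finite_of_ncard_pos (by rw [hT.ncard_eq_four]; norm_num)
  have hle := ncard_inter_le_ncard_left T S hfin
  have hne := hS T hT
  have h4 := hT.ncard_eq_four
  exact inter_eq_left.1 (eq_of_subset_of_ncard_le inter_subset_left (by omega) hfin)

lemma add_mem (hS : BStable S) {p u v : ℤ × ℤ} (h : det2 u v = 1) (hl : p - u ∈ S) (hm : p ∈ S)
    (hr : p + u ∈ S) : p + v ∈ S := by
  have hT := isBorderTri_of_det2_eq_one h p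
  by_contra hv
  apply hS _ hT
  have hTS : {p - u, p, p + u, p + v} ∩ S = {p - u, p, p + u, p + v} \ {p + v} := by
    ext q
    simp only [mem_inter_iff, Set.mem_sdiff, mem_insert_iff, mem_singleton_iff]
    aesop
  rw [hTS, ncard_sdiff_singleton_of_mem (by simp), hT.ncard_eq_four]

lemma eq_univ_of_coprime_progression (hS : BStable S) {p u : ℤ × ℤ} (hu : IsCoprime u.1 u.2)
    (hl : p - u ∈ S) (hm : p ∈ S) (hr : p + u ∈ S) : S = univ := by
  obtain ⟨α, β, hαβ⟩ := hu
  set v : ℤ × ℤ := (-β, α)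
  have h : det2 u v = 1 := by simp only [det2, v]; linarith
  have hneg : det2 (-u) (-v) = 1 := by
    simp only [det2, Prod.fst_neg, Prod.snd_neg] at h ⊢; linarith
  let Row (n : ℤ) : Prop := ∀ m : ℤ, p + m • u + n • v ∈ S
  have row_one : Row 1 := fun m => by
    have hdet : det2 u (m • u + v) = 1 := by
      simp only [det2, Prod.fst_add, Prod.snd_add, Prod.smul_fst, Prod.smul_snd,
        smul_eq_mul] at h ⊢
      linear_combination h
    simpa [add_assoc] using hS.add_mem hdet hl hm hr
  have row_succ (n : ℤ) (hn : Row n) : Row (n + 1) := fun m =>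
    mem_of_eq_of_mem (by module) (hS.add_mem h (p := p + m • u + n • v)
      (mem_of_eq_of_mem (by module) (hn (m - 1))) (hn m)
      (mem_of_eq_of_mem (by module) (hn (m + 1))))
  have row_pred (n : ℤ) (hn : Row n) : Row (n - 1) := fun m =>
    mem_of_eq_of_mem (by module) (hS.add_mem hneg (p := p + m • u + n • v)
      (mem_of_eq_of_mem (by module) (hn (m + 1))) (hn m)
      (mem_of_eq_of_mem (by module) (hn (m - 1))))
  have rows (n : ℤ) : Row n :=
    Int.inductionOn' n 1 row_one (fun k _ => row_succ k) (fun k _ => row_pred k)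
  refine eq_univ_of_forall fun z => ?_
  have hz := latticeMap_det2 h (z - p)
  have := rows (det2 u (z - p)) (det2 (z - p) v)
  dsimp only [latticeMap] at hz
  rwa [add_assoc, hz, add_sub_cancel] at this

lemma eq_univ_of_three_le_ncard (hS : BStable S) {T : Set (ℤ × ℤ)} (hT : IsBorderTri T)
    (h3 : 3 ≤ (T ∩ S).ncard) : S = univ := by
  have hTS := hS.subset_of_three_le_ncard hT h3
  obtain ⟨p, u, hu, hl, hm, hr⟩ := hT.exists_coprime_progression
  exact hS.eq_univ_of_coprime_progression hu (hTS hl) (hTS hm) (hTS hr)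

end BStable

theorem stmt7 (S : Set (ℤ × ℤ)) (hS : S ≠ Set.univ) :
    ((BStable S ∧ ∃ T, IsBorderTri T ∧ 3 ≤ (T ∩ S).ncard) → S = Set.univ) ∧
    (BStable S ↔ ∀ T, IsBorderTri T → (T ∩ S).ncard ≤ 2) := by
  refine ⟨fun ⟨hB, T, hT, h3⟩ => hB.eq_univ_of_three_le_ncard hT h3, fun hB T hT => ?_,
    fun h T hT => ?_⟩
  · by_contra! h3
    exact hS (hB.eq_univ_of_three_le_ncard hT h3)
  · have := h T hT
    omega
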